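/- Let $L \in \mathbb{N}$, let $a, q_1, \ldots, q_L \in \mathbb{R}^d$ be vectors, and let $b, p_1, \ldots, p_L > 0$ be positive reals. Suppose for each $i \in [L]$ that $\|a/b - (q_i + a)/(p_i + b)\| = \epsilon_i$ for some norm $\|\cdot\|$ on $\mathbb{R}^d$. Then $\|a/b - (\sum_{i=1}^L q_i + a)/(\sum_{i=1}^L p_i + b)\| \le \sum_{i=1}^L \epsilon_i$. -/

import Mathlib

/-!
Clearing the denominator turns the mediant defect `a/b - (q + a)/(p + b)` into
`(p + b)⁻¹ • (p • a/b - q)`, whose numerator is additive in `(p, q)`. Hence the defect of the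
combined mediant is the average `∑ᵢ (pᵢ + b)/(P + b) • (a/b - (qᵢ + a)/(pᵢ + b))` with
`P = ∑ᵢ pᵢ`, and each weight is at most `1`.
-/

open Finset

theorem inv_smul_sub_inv_smul_add_eq {K E : Type*} [Field K] [AddCommGroup E] [Module K E]
    {b p : K} (hb : b ≠ 0) (hpb : p + b ≠ 0) (a q : E) :
    b⁻¹ • a - (p + b)⁻¹ • (q + a) = (p + b)⁻¹ • (p • b⁻¹ • a - q) := by
  have hba : a = b • b⁻¹ • a := by rw [smul_smul, mul_inv_cancel₀ hb, one_smul]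
  conv_lhs => rw [← inv_smul_smul₀ hpb (b⁻¹ • a), add_smul, ← hba]
  rw [← smul_sub]
  congr 1
  abel

section Normed

variable {E : Type*} [NormedAddCommGroup E] [NormedSpace ℝ E]

theorem norm_smul_inv_smul_sub_eq {b p : ℝ} (hb : 0 < b) (hp : 0 ≤ p) (a q : E) :
    ‖p • b⁻¹ • a - q‖ = (p + b) * ‖b⁻¹ • a - (p + b)⁻¹ • (q + a)‖ := by
  have hpb : 0 < p + b := by linarith
  rw [inv_smul_sub_inv_smul_add_eq hb.ne' hpb.ne', norm_smul, Real.norm_of_nonneg (by positivity),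
    mul_inv_cancel_left₀ hpb.ne']

theorem norm_inv_smul_sub_inv_smul_sum_add_le {ι : Type*} (s : Finset ι) {b : ℝ} {p : ι → ℝ}
    (hb : 0 < b) (hp : ∀ i ∈ s, 0 ≤ p i) (a : E) (q : ι → E) :
    ‖b⁻¹ • a - (∑ i ∈ s, p i + b)⁻¹ • (∑ i ∈ s, q i + a)‖ ≤
      ∑ i ∈ s, ‖b⁻¹ • a - (p i + b)⁻¹ • (q i + a)‖ := by
  set P := ∑ i ∈ s, p i
  have hPb : 0 < P + b := by have : 0 ≤ P := sum_nonneg hp; linarith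
  calc ‖b⁻¹ • a - (P + b)⁻¹ • (∑ i ∈ s, q i + a)‖
      = (P + b)⁻¹ * ‖∑ i ∈ s, (p i • b⁻¹ • a - q i)‖ := by
        rw [inv_smul_sub_inv_smul_add_eq hb.ne' hPb.ne', norm_smul,
          Real.norm_of_nonneg (by positivity), sum_sub_distrib, sum_smul]
    _ ≤ (P + b)⁻¹ * ∑ i ∈ s, ‖p i • b⁻¹ • a - q i‖ := by gcongr; exact norm_sum_le _ _
    _ = ∑ i ∈ s, (p i + b) / (P + b) * ‖b⁻¹ • a - (p i + b)⁻¹ • (q i + a)‖ := by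
        rw [mul_sum]
        refine sum_congr rfl fun i hi => ?_
        rw [norm_smul_inv_smul_sub_eq hb (hp i hi)]
        ring
    _ ≤ ∑ i ∈ s, ‖b⁻¹ • a - (p i + b)⁻¹ • (q i + a)‖ := by
        refine sum_le_sum fun i hi => mul_le_of_le_one_left (norm_nonneg _) ?_
        rw [div_le_one hPb]
        linarith [single_le_sum hp hi]

end Normed

/-- If `‖a/b - (qᵢ+a)/(pᵢ+b)‖ = εᵢ` for each `i ∈ [L]`, with `b, pᵢ > 0`,
then `‖a/b - (∑qᵢ+a)/(∑pᵢ+b)‖ ≤ ∑εᵢ`. -/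
theorem stmt_0 {E : Type*} [NormedAddCommGroup E] [NormedSpace ℝ E]
    (L : ℕ) (a : E) (q : Fin L → E) (b : ℝ) (p : Fin L → ℝ) (ε : Fin L → ℝ)
    (hb : 0 < b) (hp : ∀ i, 0 < p i)
    (h : ∀ i, ‖b⁻¹ • a - (p i + b)⁻¹ • (q i + a)‖ = ε i) :
    ‖b⁻¹ • a - ((∑ i, p i) + b)⁻¹ • ((∑ i, q i) + a)‖ ≤ ∑ i, ε i := by
  simpa only [h] using
    norm_inv_smul_sub_inv_smul_sum_add_le univ hb (fun i _ => (hp i).le) a q
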